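/- arXiv:1405.1945 — 4 statements merged into one kernel-verified Lean document; each statement's English description precedes it below -/
import Mathlib

section
/- With A_1,...,A_n the anticommuting self-adjoint matrices built from Pauli matrices as above, the linear map φ: ℓ_∞^n → M_{2^n}(ℂ) defined by φ(e_i) = (1/√n) A_i is bounded with norm at most √2. -/
open scoped Matrix BigOperators

/-!
The matrices `A_k = pauliOp n k` are self-adjoint and satisfy the Clifford relations
`A_k A_l + A_l A_k = 2 δ_kl`, so `x = ∑ a_k A_k` satisfies `x⋆x + xx⋆ = 2 ∑ |a_k|² • 1`.
In a C⋆-algebra `‖x‖² = ‖x⋆x‖ ≤ ‖x⋆x + xx⋆‖` since `xx⋆ ≥ 0`; hence `‖x‖² ≤ 2n` when all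
`|a_k| ≤ 1`, and dividing by `√n` gives `√2`.
-/

noncomputable def opNorm {ι : Type*} [Fintype ι] [DecidableEq ι] (A : Matrix ι ι ℂ) : ℝ :=
  ‖Matrix.toEuclideanCLM (𝕜 := ℂ) A‖

def pauliX : Matrix (Fin 2) (Fin 2) ℂ := !![0, 1; 1, 0]

def pauliZ : Matrix (Fin 2) (Fin 2) ℂ := !![1, 0; 0, -1]

noncomputable def pauliOp (n : ℕ) (k : Fin n) :
    Matrix (Fin n → Fin 2) (Fin n → Fin 2) ℂ :=
  Matrix.of fun f g => ∏ j : Fin n,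
    (if j < k then pauliZ else if j = k then pauliX else 1) (f j) (g j)

namespace Matrix

variable {ι κ R : Type*} [Fintype ι] [CommSemiring R]

def piKronecker (M : ι → Matrix κ κ R) : Matrix (ι → κ) (ι → κ) R :=
  of fun f g => ∏ j, M j (f j) (g j)

theorem piKronecker_mul [Fintype κ] [DecidableEq ι] (M N : ι → Matrix κ κ R) :
    piKronecker M * piKronecker N = piKronecker fun j => M j * N j := by
  ext f g
  simp only [piKronecker, mul_apply, of_apply, Fintype.prod_sum, Finset.prod_mul_distrib]

theorem piKronecker_one [DecidableEq κ] :
    piKronecker (fun _ : ι => (1 : Matrix κ κ R)) = 1 := by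
  ext f g
  by_cases h : f = g
  · simp [piKronecker, one_apply, h]
  · obtain ⟨j, hj⟩ := Function.ne_iff.mp h
    simpa [piKronecker, one_apply, h] using
      Finset.prod_eq_zero (Finset.mem_univ j) (by simp [hj])

theorem piKronecker_smul (c : ι → R) (M : ι → Matrix κ κ R) :
    piKronecker (fun j => c j • M j) = (∏ j, c j) • piKronecker M := by
  ext f g
  simp [piKronecker, Finset.prod_mul_distrib]

theorem conjTranspose_piKronecker [StarRing R] (M : ι → Matrix κ κ R) :
    (piKronecker M)ᴴ = piKronecker fun j => (M j)ᴴ := by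
  ext f g
  simp [piKronecker, star_prod]

theorem piKronecker_mul_eq_smul_mul_of_forall [Fintype κ] [DecidableEq ι]
    (M N : ι → Matrix κ κ R) (c : ι → R) (h : ∀ j, M j * N j = c j • (N j * M j)) :
    piKronecker M * piKronecker N = (∏ j, c j) • (piKronecker N * piKronecker M) := by
  simp only [piKronecker_mul, h, piKronecker_smul]

end Matrix

open Matrix

theorem pauliX_mul_self : pauliX * pauliX = 1 := by
  ext i j; fin_cases i <;> fin_cases j <;> simp [pauliX, mul_apply, one_apply]

theorem pauliZ_mul_self : pauliZ * pauliZ = 1 := by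
  ext i j; fin_cases i <;> fin_cases j <;> simp [pauliZ, mul_apply, one_apply]

theorem pauliX_mul_pauliZ : pauliX * pauliZ = -(pauliZ * pauliX) := by
  ext i j; fin_cases i <;> fin_cases j <;> simp [pauliX, pauliZ, mul_apply]

theorem isHermitian_pauliX : pauliX.IsHermitian := by
  ext i j; fin_cases i <;> fin_cases j <;> simp [pauliX]

theorem isHermitian_pauliZ : pauliZ.IsHermitian := by
  ext i j; fin_cases i <;> fin_cases j <;> simp [pauliZ]

def pauliFactor {n : ℕ} (k j : Fin n) : Matrix (Fin 2) (Fin 2) ℂ :=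
  if j < k then pauliZ else if j = k then pauliX else 1

theorem pauliOp_eq_piKronecker (n : ℕ) (k : Fin n) :
    pauliOp n k = piKronecker (pauliFactor k) := rfl

theorem pauliFactor_mul_self {n : ℕ} (k j : Fin n) : pauliFactor k j * pauliFactor k j = 1 := by
  unfold pauliFactor
  split_ifs <;> simp [pauliX_mul_self, pauliZ_mul_self]

theorem isHermitian_pauliFactor {n : ℕ} (k j : Fin n) : (pauliFactor k j).IsHermitian := by
  unfold pauliFactor
  split_ifs
  exacts [isHermitian_pauliZ, isHermitian_pauliX, isHermitian_one]

theorem pauliFactor_mul_of_lt {n : ℕ} {k l : Fin n} (h : k < l) (j : Fin n) :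
    pauliFactor k j * pauliFactor l j =
      (if j = k then (-1 : ℂ) else 1) • (pauliFactor l j * pauliFactor k j) := by
  unfold pauliFactor
  rcases lt_trichotomy j k with hj | rfl | hj
  · simp [hj, hj.trans h, hj.ne]
  · simp [h, pauliX_mul_pauliZ]
  · simp only [not_lt_of_gt hj, hj.ne', if_false, one_smul]
    split_ifs <;> simp

theorem pauliOp_mul_self (n : ℕ) (k : Fin n) : pauliOp n k * pauliOp n k = 1 := by
  simp only [pauliOp_eq_piKronecker, piKronecker_mul, pauliFactor_mul_self, piKronecker_one]

theorem isHermitian_pauliOp (n : ℕ) (k : Fin n) : (pauliOp n k).IsHermitian := by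
  simp only [IsHermitian, pauliOp_eq_piKronecker, conjTranspose_piKronecker,
    fun j => (isHermitian_pauliFactor k j).eq]

theorem pauliOp_mul_of_lt {n : ℕ} {k l : Fin n} (h : k < l) :
    pauliOp n k * pauliOp n l = -(pauliOp n l * pauliOp n k) := by
  rw [pauliOp_eq_piKronecker, pauliOp_eq_piKronecker,
    piKronecker_mul_eq_smul_mul_of_forall _ _ _ (pauliFactor_mul_of_lt h)]
  simp

theorem pauliOp_mul_add_mul (n : ℕ) (k l : Fin n) :
    pauliOp n k * pauliOp n l + pauliOp n l * pauliOp n k = if k = l then 2 else 0 := by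
  rcases lt_trichotomy k l with h | rfl | h
  · simp [h.ne, pauliOp_mul_of_lt h]
  · simp [pauliOp_mul_self, one_add_one_eq_two]
  · simp [h.ne', pauliOp_mul_of_lt h]

theorem star_mul_self_add_mul_star_eq_of_clifford {S R ι : Type*} [CommRing S] [StarRing S]
    [Ring R] [StarRing R] [Algebra S R] [StarModule S R] [Fintype ι] [DecidableEq ι]
    (u : ι → R) (hsa : ∀ i, IsSelfAdjoint (u i))
    (hcl : ∀ i j, u i * u j + u j * u i = if i = j then 2 else 0) (a : ι → S) :
    star (∑ i, a i • u i) * (∑ i, a i • u i) + (∑ i, a i • u i) * star (∑ i, a i • u i) =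
      (2 * ∑ i, star (a i) * a i) • (1 : R) := by
  have hstar : star (∑ i, a i • u i) = ∑ i, star (a i) • u i := by
    simp only [star_sum, star_smul, (hsa _).star_eq]
  rw [hstar, Finset.sum_mul_sum, Finset.sum_mul_sum,
    Finset.sum_comm (f := fun i j => (a i • u i) * _), ← Finset.sum_add_distrib]
  simp only [smul_mul_smul_comm, ← Finset.sum_add_distrib, mul_comm (a _) (star (a _)),
    ← smul_add, hcl, smul_ite, smul_zero, Finset.sum_ite_eq, Finset.mem_univ, if_true,
    Finset.mul_sum, Finset.sum_smul]
  refine Finset.sum_congr rfl fun i _ => ?_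
  rw [mul_comm 2, mul_smul (star (a i) * a i), two_smul, one_add_one_eq_two]

theorem norm_sq_le_norm_star_mul_self_add_mul_star {A : Type*} [CStarAlgebra A] [PartialOrder A]
    [StarOrderedRing A] (x : A) : ‖x‖ ^ 2 ≤ ‖star x * x + x * star x‖ := by
  rw [sq, ← CStarRing.norm_star_mul_self]
  exact CStarAlgebra.norm_le_norm_of_nonneg_of_le (star_mul_self_nonneg x)
    (le_add_of_nonneg_right (mul_star_self_nonneg x))

theorem norm_sum_smul_sq_le_of_clifford {A ι : Type*} [CStarAlgebra A] [PartialOrder A]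
    [StarOrderedRing A] [Fintype ι] [DecidableEq ι] (u : ι → A) (hsa : ∀ i, IsSelfAdjoint (u i))
    (hcl : ∀ i j, u i * u j + u j * u i = if i = j then 2 else 0) (a : ι → ℂ) :
    ‖∑ i, a i • u i‖ ^ 2 ≤ 2 * ∑ i, ‖a i‖ ^ 2 := by
  rcases subsingleton_or_nontrivial A with hA | hA
  · rw [Subsingleton.elim (∑ i, a i • u i) 0, norm_zero, sq, zero_mul]
    positivity
  calc ‖∑ i, a i • u i‖ ^ 2 ≤ ‖(2 * ∑ i, star (a i) * a i) • (1 : A)‖ := by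
        rw [← star_mul_self_add_mul_star_eq_of_clifford u hsa hcl]
        exact norm_sq_le_norm_star_mul_self_add_mul_star _
    _ = 2 * ∑ i, ‖a i‖ ^ 2 := by
        simp only [norm_smul, norm_one, mul_one, Complex.star_def, Complex.conj_mul']
        norm_cast
        exact Real.norm_of_nonneg (by positivity)

/-- The linear map `φ : ℓ_∞^n → M_{2^n}(ℂ)` defined by `φ(e_i) = (1/√n) A_i` (with `A_i` the
anticommuting self-adjoint matrices built from Pauli matrices) is bounded with norm at most
`√2`: whenever `sup_i |a i| ≤ 1`, the operator norm of `φ(a) = (1/√n) ∑ i, a i • A i`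
is at most `√2`. -/
theorem stmt2 (n : ℕ) (a : Fin n → ℂ) (ha : ∀ i, ‖a i‖ ≤ 1) :
    opNorm (((Real.sqrt n)⁻¹ : ℂ) • ∑ i, a i • pauliOp n i) ≤ Real.sqrt 2 := by
  set u := fun i => toEuclideanCLM (𝕜 := ℂ) (pauliOp n i)
  have hsa (i : Fin n) : IsSelfAdjoint (u i) := (isHermitian_pauliOp n i).isSelfAdjoint.map _
  have hcl (i j : Fin n) : u i * u j + u j * u i = if i = j then 2 else 0 := by
    simpa [u, apply_ite, map_ofNat] using
      congrArg (toEuclideanCLM (𝕜 := ℂ)) (pauliOp_mul_add_mul n i j)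
  have hsum : ∑ i, ‖a i‖ ^ 2 ≤ n := by
    simpa using Finset.sum_le_card_nsmul Finset.univ _ 1 fun i _ =>
      pow_le_one₀ (norm_nonneg _) (ha i)
  have hnorm : ‖∑ i, a i • u i‖ ≤ √2 * √n := by
    rw [← Real.sqrt_mul zero_le_two]
    refine Real.le_sqrt_of_sq_le ?_
    linarith [norm_sum_smul_sq_le_of_clifford u hsa hcl a]
  calc opNorm (((√n)⁻¹ : ℂ) • ∑ i, a i • pauliOp n i) = (√n)⁻¹ * ‖∑ i, a i • u i‖ := by
        simp [opNorm, u, norm_smul]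
    _ ≤ (√n)⁻¹ * (√2 * √n) := by gcongr
    _ ≤ √2 := by
        rw [mul_comm, mul_assoc]
        exact mul_le_of_le_one_right (Real.sqrt_nonneg 2)
          (mul_inv_le_one_of_le₀ le_rfl (Real.sqrt_nonneg _))
end

section
/- Let ρ be a density matrix on ℂ^{n²} ≅ ℂ^n ⊗ ℂ^n of the Chruściński–Kossakowski isotropic-like form ρ = Σ_{i,j=1}^n a_{ij} |ii⟩⟨jj| + Σ_{i≠j} c_{ij} |ij⟩⟨ij| with (a_{ij}) positive semidefinite, c_{ij} ≥ 0, c_{ij} c_{ji} ≥ |a_{ij}|², and Σ_i a_{ii} + Σ_{i≠j} c_{ij} = 1. Then the projective tensor norm of ρ in S_1^n ⊗_π S_1^n is at most 2. -/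
open scoped Matrix Kronecker BigOperators

open ComplexOrder

/-- The trace norm `‖A‖₁ = Tr √(AᴴA)` on `M_n(ℂ)` (the norm of the Schatten class `S_1^n`). -/
noncomputable def traceNorm {n : ℕ} (A : Matrix (Fin n) (Fin n) ℂ) : ℝ :=
  (((Matrix.posSemidef_conjTranspose_mul_self A).1.eigenvectorUnitary.1 *
      Matrix.diagonal (((↑) : ℝ → ℂ) ∘ (√·) ∘ (Matrix.posSemidef_conjTranspose_mul_self A).1.eigenvalues) *
      (star (Matrix.posSemidef_conjTranspose_mul_self A).1.eigenvectorUnitary : Matrix (Fin n) (Fin n) ℂ)).trace).re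

/-- The projective tensor norm on `S_1^n ⊗_π S_1^n`, for an element realized as a matrix on
`ℂ^n ⊗ ℂ^n`: the infimum of `∑ r, ‖x r‖₁ ‖y r‖₁` over all finite decompositions
`ρ = ∑ r, x r ⊗ y r`. -/
noncomputable def projNorm {n : ℕ} (ρ : Matrix (Fin n × Fin n) (Fin n × Fin n) ℂ) : ℝ :=
  sInf {t : ℝ | ∃ (N : ℕ) (x y : Fin N → Matrix (Fin n) (Fin n) ℂ),
    ρ = ∑ r, x r ⊗ₖ y r ∧ t = ∑ r, traceNorm (x r) * traceNorm (y r)}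

/-!
Expanding `ρ` in the matrix units `|p₁⟩⟨q₁| ⊗ |p₂⟩⟨q₂|`, whose tensor factors are rank one,
of trace norms `|ρ_pq|` and `1`, bounds `‖ρ‖_π` by the `ℓ¹` norm of the entries of `ρ`,
that is by `∑ |a_ij| + ∑_{i≠j} c_ij`. The diagonal entries `a_ii` are nonnegative, and off the
diagonal AM-GM gives `|a_ij| ≤ √(c_ij c_ji) ≤ (c_ij + c_ji) / 2`; summing over `i ≠ j` the
bound becomes `∑ a_ii + 2 ∑_{i≠j} c_ij = 1 + ∑_{i≠j} c_ij ≤ 2`.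
-/

open Matrix
open scoped MatrixOrder

lemma traceNorm_eq_re_trace_sqrt {n : ℕ} (A : Matrix (Fin n) (Fin n) ℂ) :
    traceNorm A = (CFC.sqrt (Aᴴ * A)).trace.re := by
  have h := posSemidef_conjTranspose_mul_self A
  have hsqrt : (fun x : ℝ => ((NNReal.sqrt x.toNNReal : ℝ))) = Real.sqrt := by
    funext x; rw [Real.sqrt]
  rw [CFC.sqrt_eq_cfc, cfc_nnreal_eq_real _ _ h.nonneg, h.1.cfc_eq, hsqrt]
  unfold traceNorm IsHermitian.cfc
  rw [Unitary.conjStarAlgAut_apply]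
  rfl

lemma traceNorm_nonneg {n : ℕ} (A : Matrix (Fin n) (Fin n) ℂ) : 0 ≤ traceNorm A := by
  have h : (CFC.sqrt (Aᴴ * A)).PosSemidef := nonneg_iff_posSemidef.mp (CFC.sqrt_nonneg _)
  rw [traceNorm_eq_re_trace_sqrt]
  exact Complex.nonneg_iff.mp h.trace_nonneg |>.1

lemma traceNorm_single {n : ℕ} (i j : Fin n) (α : ℂ) :
    traceNorm (single i j α) = ‖α‖ := by
  set D : Matrix (Fin n) (Fin n) ℂ := diagonal (Pi.single j (‖α‖ : ℂ))
  have hD : 0 ≤ D := (PosSemidef.diagonal fun k => by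
    by_cases h : k = j <;> simp [h]).nonneg
  have hsq : (single i j α)ᴴ * single i j α = D * D := by
    rw [conjTranspose_single, single_mul_single_same, diagonal_mul_diagonal, Complex.star_def,
      Complex.conj_mul', ← diagonal_single, sq, Pi.single_mul]
    rfl
  rw [traceNorm_eq_re_trace_sqrt, hsq, CFC.sqrt_mul_self D hD, trace_diagonal]
  simp

lemma projNorm_le_of_eq_sum {n : ℕ} {ι : Type*} [Fintype ι]
    {ρ : Matrix (Fin n × Fin n) (Fin n × Fin n) ℂ} (x y : ι → Matrix (Fin n) (Fin n) ℂ)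
    (h : ρ = ∑ r, x r ⊗ₖ y r) :
    projNorm ρ ≤ ∑ r, traceNorm (x r) * traceNorm (y r) := by
  let e := Fintype.equivFin ι
  refine csInf_le ⟨0, ?_⟩ ⟨Fintype.card ι, x ∘ e.symm, y ∘ e.symm, ?_, ?_⟩
  · rintro _ ⟨N, x, y, -, rfl⟩
    exact Finset.sum_nonneg fun r _ => mul_nonneg (traceNorm_nonneg _) (traceNorm_nonneg _)
  · rw [h]; exact (e.symm.sum_comp fun r => x r ⊗ₖ y r).symm
  · exact (e.symm.sum_comp fun r => traceNorm (x r) * traceNorm (y r)).symm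

lemma projNorm_le_sum_norm {n : ℕ} (ρ : Matrix (Fin n × Fin n) (Fin n × Fin n) ℂ) :
    projNorm ρ ≤ ∑ p, ∑ q, ‖ρ p q‖ := by
  have hdec : ρ = ∑ pq : (Fin n × Fin n) × (Fin n × Fin n),
      single pq.1.1 pq.2.1 (ρ pq.1 pq.2) ⊗ₖ single pq.1.2 pq.2.2 (1 : ℂ) := by
    conv_lhs => rw [matrix_eq_sum_single ρ]
    simp [single_kronecker_single, Fintype.sum_prod_type]
  refine (projNorm_le_of_eq_sum _ _ hdec).trans_eq ?_
  simp [traceNorm_single, Fintype.sum_prod_type]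

section EntrySums

variable {ι : Type*} [Fintype ι] [DecidableEq ι]

lemma sum_prod_eq_sum_diag_add_sum_offDiag {M : Type*} [AddCommMonoid M] (f : ι → ι → M) :
    ∑ p : ι × ι, f p.1 p.2 = ∑ i, f i i + ∑ p : ι × ι, if p.1 ≠ p.2 then f p.1 p.2 else 0 := by
  have hsplit : ∀ p : ι × ι, f p.1 p.2 =
      (if p.1 = p.2 then f p.1 p.2 else 0) + (if p.1 ≠ p.2 then f p.1 p.2 else 0) := fun p => by
    by_cases h : p.1 = p.2 <;> simp [h]
  rw [Fintype.sum_congr _ _ hsplit, Finset.sum_add_distrib]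
  congr 1
  simp [Fintype.sum_prod_type]

lemma sum_offDiag_le_of_sq_le_mul {b c : ι → ι → ℝ} (hc : ∀ i j, i ≠ j → 0 ≤ c i j)
    (hbc : ∀ i j, i ≠ j → b i j ^ 2 ≤ c i j * c j i) :
    (∑ p : ι × ι, if p.1 ≠ p.2 then b p.1 p.2 else 0) ≤
      ∑ p : ι × ι, if p.1 ≠ p.2 then c p.1 p.2 else 0 := by
  have hswap : (∑ p : ι × ι, if p.1 ≠ p.2 then c p.2 p.1 else 0) =
      ∑ p : ι × ι, if p.1 ≠ p.2 then c p.1 p.2 else 0 :=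
    Fintype.sum_equiv (Equiv.prodComm ι ι) _ _ fun p => by simp [ne_comm]
  have hamgm : ∀ p : ι × ι, 2 * (if p.1 ≠ p.2 then b p.1 p.2 else 0) ≤
      (if p.1 ≠ p.2 then c p.1 p.2 else 0) + (if p.1 ≠ p.2 then c p.2 p.1 else 0) := by
    rintro ⟨i, j⟩
    by_cases h : i = j
    · simp [h]
    · simp only [ne_eq, h, not_false_eq_true, if_true]
      -- AM-GM: `2 b ≤ 2 √(c c') ≤ c + c'`
      nlinarith [hc i j h, hc j i (Ne.symm h), hbc i j h, sq_nonneg (c i j - c j i)]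
  have hsum := Finset.sum_le_sum (s := Finset.univ) fun p _ => hamgm p
  rw [← Finset.mul_sum, Finset.sum_add_distrib, hswap] at hsum
  linarith

lemma sum_sum_norm_le_of_sq_le_mul {a : Matrix ι ι ℂ} {c : ι → ι → ℝ} (hdiag : ∀ i, 0 ≤ a i i)
    (hc : ∀ i j, i ≠ j → 0 ≤ c i j) (hac : ∀ i j, i ≠ j → ‖a i j‖ ^ 2 ≤ c i j * c j i) :
    ∑ i, ∑ j, ‖a i j‖ ≤ ∑ i, (a i i).re + ∑ p : ι × ι, if p.1 ≠ p.2 then c p.1 p.2 else 0 := by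
  rw [← Fintype.sum_prod_type', sum_prod_eq_sum_diag_add_sum_offDiag fun i j => ‖a i j‖]
  exact add_le_add (Finset.sum_le_sum fun i _ => (Complex.re_eq_norm.mpr (hdiag i)).ge)
    (sum_offDiag_le_of_sq_le_mul hc hac)

def isotropicLikeMatrix (a : Matrix ι ι ℂ) (c : ι → ι → ℝ) : Matrix (ι × ι) (ι × ι) ℂ :=
  of fun p q =>
    (if p.1 = p.2 ∧ q.1 = q.2 then a p.1 q.1 else 0) +
    (if p = q ∧ p.1 ≠ p.2 then (c p.1 p.2 : ℂ) else 0)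

lemma sum_sum_norm_isotropicLikeMatrix_le (a : Matrix ι ι ℂ) {c : ι → ι → ℝ}
    (hc : ∀ i j, i ≠ j → 0 ≤ c i j) :
    ∑ p, ∑ q, ‖isotropicLikeMatrix a c p q‖ ≤
      ∑ i, ∑ j, ‖a i j‖ + ∑ p : ι × ι, if p.1 ≠ p.2 then c p.1 p.2 else 0 := by
  calc ∑ p, ∑ q, ‖isotropicLikeMatrix a c p q‖
      ≤ ∑ p : ι × ι, ∑ q : ι × ι, (‖if p.1 = p.2 ∧ q.1 = q.2 then a p.1 q.1 else 0‖ +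
          ‖if p = q ∧ p.1 ≠ p.2 then (c p.1 p.2 : ℂ) else 0‖) := by
        gcongr; exact norm_add_le _ _
    _ = _ := by
        simp only [Finset.sum_add_distrib]
        congr 1
        · simp [Fintype.sum_prod_type, ite_and, apply_ite norm, Finset.sum_ite_irrel]
        · simp only [ne_eq, ite_and, ite_not, apply_ite norm, norm_zero, Complex.norm_real,
            Real.norm_eq_abs, Finset.sum_ite_eq, Finset.mem_univ, ↓reduceIte, Fintype.sum_prod_type]
          refine Fintype.sum_congr _ _ fun i => Fintype.sum_congr _ _ fun j => ?_
          split_ifs with h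
          · rfl
          · exact abs_of_nonneg (hc i j h)

end EntrySums

/-- A density matrix of the Chruściński–Kossakowski isotropic-like form
`ρ = ∑_{i,j} a_{ij} |ii⟩⟨jj| + ∑_{i≠j} c_{ij} |ij⟩⟨ij|` with `(a_{ij})` positive semidefinite,
`c_{ij} ≥ 0`, `c_{ij} c_{ji} ≥ |a_{ij}|²` and `∑_i a_{ii} + ∑_{i≠j} c_{ij} = 1`
has projective tensor norm at most `2` in `S_1^n ⊗_π S_1^n`. -/
theorem stmt8 (n : ℕ) (a : Matrix (Fin n) (Fin n) ℂ) (c : Fin n → Fin n → ℝ)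
    (ha : a.PosSemidef)
    (hc : ∀ i j, i ≠ j → 0 ≤ c i j)
    (hac : ∀ i j, i ≠ j → ‖a i j‖ ^ 2 ≤ c i j * c j i)
    (hnorm : (∑ i, (a i i).re) + (∑ p : Fin n × Fin n,
      if p.1 ≠ p.2 then c p.1 p.2 else 0) = 1)
    (ρ : Matrix (Fin n × Fin n) (Fin n × Fin n) ℂ)
    (hρ : ρ = Matrix.of fun p q =>
      (if p.1 = p.2 ∧ q.1 = q.2 then a p.1 q.1 else 0) +
      (if p = q ∧ p.1 ≠ p.2 then (c p.1 p.2 : ℂ) else 0)) :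
    projNorm ρ ≤ 2 := by
  change ρ = isotropicLikeMatrix a c at hρ
  have hdiag : ∀ i, 0 ≤ a i i := fun i => ha.diag_nonneg
  have htrace : 0 ≤ ∑ i, (a i i).re :=
    Finset.sum_nonneg fun i _ => (Complex.nonneg_iff.mp (hdiag i)).1
  calc projNorm ρ ≤ ∑ p, ∑ q, ‖ρ p q‖ := projNorm_le_sum_norm ρ
    _ ≤ ∑ i, ∑ j, ‖a i j‖ + ∑ p : Fin n × Fin n, if p.1 ≠ p.2 then c p.1 p.2 else 0 :=
        hρ ▸ sum_sum_norm_isotropicLikeMatrix_le a hc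
    _ ≤ ∑ i, (a i i).re + 2 * ∑ p : Fin n × Fin n, if p.1 ≠ p.2 then c p.1 p.2 else 0 := by
        linarith [sum_sum_norm_le_of_sq_le_mul hdiag hc hac]
    _ ≤ 2 := by linarith
end

section
/- Let |ψ_α⟩ = Σ_{i=1}^n α_i |ii⟩ with α_i > 0 and Σ_i α_i² = 1, let 0 ≤ λ ≤ 1, and define ρ_λ = (1−λ) I/n² + λ |ψ_α⟩⟨ψ_α| on ℂ^n ⊗ ℂ^n. Then the partial transpose of ρ_λ has eigenvalues (1−λ)/n² ± λ α_i α_j for i ≠ j and (1−λ)/n² + λ α_i² for i = 1,...,n. Consequently ρ_λ has positive partial transpose if and only if λ ≤ min_{i≠j} 1/(1 + n² α_i α_j). -/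
/-!
Write `c = (1 - λ)/n²`. The partial transpose of `|ψ_α⟩⟨ψ_α|` is the weighted swap
`W : e_ij ↦ α_i α_j e_ji`, so `ρ_λ^Γ = c + λ W`. The vectors `e_ii` and `e_ij ± e_ji` are
eigenvectors of `W` with eigenvalues `α_i²` and `± α_i α_j`, which gives the spectrum. For positivity,
the quadratic form of `c + λ W` splits over the pairs `{(i, j), (j, i)}`, and on such a pair, with
`t = λ α_i α_j`, it equals `(c - t)(|x|² + |y|²) + t |x + y|²`; this is nonnegative for all `x, y`
exactly when `t ≤ c`.
-/

open scoped Matrix BigOperators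
open ComplexOrder

/-- The partial transpose (on the second tensor factor) of a matrix on `ℂ^n ⊗ ℂ^n`. -/
def partialTranspose {n : ℕ} (ρ : Matrix (Fin n × Fin n) (Fin n × Fin n) ℂ) :
    Matrix (Fin n × Fin n) (Fin n × Fin n) ℂ :=
  Matrix.of fun p q => ρ (p.1, q.2) (q.1, p.2)

theorem Matrix.mem_spectrum_of_mulVec_eq {K m : Type*} [Field K] [Fintype m] [DecidableEq m]
    {M : Matrix m m K} {v : m → K} {μ : K} (hv : v ≠ 0) (h : M *ᵥ v = μ • v) :
    μ ∈ spectrum K M := by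
  rw [← AlgEquiv.spectrum_eq (Matrix.toLinAlgEquiv' (R := K) (n := m)) M]
  exact Module.End.hasEigenvalue_iff_mem_spectrum.mp
    (Module.End.hasEigenvalue_of_hasEigenvector ⟨Module.End.mem_eigenspace_iff.mpr h, hv⟩)

theorem Complex.zero_le_conj_mul_add_conj_mul {c t : ℝ} (ht : 0 ≤ t) (htc : t ≤ c) (x y : ℂ) :
    0 ≤ (starRingEnd ℂ) x * (c * x + t * y) + (starRingEnd ℂ) y * (c * y + t * x) := by
  have key : (starRingEnd ℂ) x * (c * x + t * y) + (starRingEnd ℂ) y * (c * y + t * x) =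
      (((c - t) * (normSq x + normSq y) + t * normSq (x + y) : ℝ) : ℂ) := by
    push_cast [normSq_eq_conj_mul_self, map_add]
    ring
  rw [key, zero_le_real]
  exact add_nonneg (mul_nonneg (sub_nonneg.mpr htc) (add_nonneg (normSq_nonneg _)
    (normSq_nonneg _))) (mul_nonneg ht (normSq_nonneg _))

section WeightedSwap

variable {ι : Type*} [DecidableEq ι]

/-- The partial transpose of `|ψ⟩⟨ψ|` for `ψ = ∑ i, a i • e_ii`. -/
def weightedSwap (a : ι → ℝ) : Matrix (ι × ι) (ι × ι) ℂ :=
  Matrix.of fun p q => if q = p.swap then ((a p.1 * a p.2 : ℝ) : ℂ) else 0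

theorem isHermitian_weightedSwap (a : ι → ℝ) : (weightedSwap a).IsHermitian := by
  ext p q
  simp only [weightedSwap, Matrix.conjTranspose_apply, Matrix.of_apply]
  by_cases h : q = p.swap
  · subst h; simp [mul_comm]
  · have h' : p ≠ q.swap := fun h'' => h (by rw [h'', Prod.swap_swap])
    simp [h, h']

variable [Fintype ι]

theorem weightedSwap_mulVec_apply (a : ι → ℝ) (x : ι × ι → ℂ) (p : ι × ι) :
    (weightedSwap a *ᵥ x) p = ((a p.1 * a p.2 : ℝ) : ℂ) * x p.swap := by
  simp [weightedSwap, Matrix.mulVec, dotProduct]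

theorem weightedSwap_mulVec_single_add_smul_single (a : ι → ℝ) (i j : ι) {s : ℂ}
    (hs : s * s = 1) :
    weightedSwap a *ᵥ (Pi.single (i, j) 1 + s • Pi.single (j, i) 1) =
      (s * ((a i * a j : ℝ) : ℂ)) • (Pi.single (i, j) 1 + s • Pi.single (j, i) 1) := by
  funext ⟨k, l⟩
  rw [weightedSwap_mulVec_apply]
  simp only [Pi.add_apply, Pi.smul_apply, Pi.single_apply, Prod.swap_prod_mk, Prod.mk.injEq,
    smul_eq_mul]
  split_ifs <;> grind

theorem mem_spectrum_smul_one_add_smul_weightedSwap (c l : ℝ) (a : ι → ℝ) (i j : ι) {s : ℝ}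
    (hs : s * s = 1) (hv : i ≠ j ∨ s = 1) :
    ((c + l * (s * (a i * a j)) : ℝ) : ℂ) ∈
      spectrum ℂ ((c : ℂ) • 1 + (l : ℂ) • weightedSwap a) := by
  have hs' : (s : ℂ) * s = 1 := by exact_mod_cast hs
  refine Matrix.mem_spectrum_of_mulVec_eq
    (v := Pi.single (i, j) 1 + (s : ℂ) • Pi.single (j, i) 1) ?_ ?_
  · intro h0
    have := congrFun h0 (i, j)
    rcases hv with hij | rfl
    · simp [hij] at this
    · rcases eq_or_ne i j with rfl | hij
      · norm_num at this
      · simp [hij] at this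
  · rw [Matrix.add_mulVec, Matrix.smul_mulVec, Matrix.smul_mulVec, Matrix.one_mulVec,
      weightedSwap_mulVec_single_add_smul_single a i j hs', smul_smul, ← add_smul]
    push_cast
    rfl

theorem posSemidef_smul_one_add_smul_weightedSwap {c l : ℝ} {a : ι → ℝ} (hc : 0 ≤ c) (hl : 0 ≤ l)
    (ha : ∀ i, 0 ≤ a i) (hbound : ∀ i j, i ≠ j → l * (a i * a j) ≤ c) :
    ((c : ℂ) • 1 + (l : ℂ) • weightedSwap a).PosSemidef := by
  refine .of_dotProduct_mulVec_nonneg ((Matrix.isHermitian_one.smul (Complex.conj_ofReal c)).add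
    ((isHermitian_weightedSwap a).smul (Complex.conj_ofReal l))) fun x => ?_
  set f : ι × ι → ℂ := fun p =>
    (starRingEnd ℂ) (x p) * (c * x p + ((l * (a p.1 * a p.2) : ℝ) : ℂ) * x p.swap)
  have hform : star x ⬝ᵥ (((c : ℂ) • 1 + (l : ℂ) • weightedSwap a) *ᵥ x) = ∑ p, f p := by
    simp only [dotProduct, Matrix.add_mulVec, Matrix.smul_mulVec, Matrix.one_mulVec, Pi.add_apply,
      Pi.smul_apply, weightedSwap_mulVec_apply, smul_eq_mul, Pi.star_apply, Complex.star_def, f]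
    refine Finset.sum_congr rfl fun p _ => ?_
    push_cast
    ring
  have hpair : ∀ p, 0 ≤ f p + f p.swap := by
    rintro ⟨i, j⟩
    have ht : 0 ≤ l * (a i * a j) := mul_nonneg hl (mul_nonneg (ha i) (ha j))
    rcases eq_or_ne i j with rfl | hij
    · have hdiag : f (i, i) = (((c + l * (a i * a i)) * Complex.normSq (x (i, i)) : ℝ) : ℂ) := by
        simp only [f, Prod.swap_prod_mk]
        push_cast [Complex.normSq_eq_conj_mul_self]
        ring
      have : 0 ≤ f (i, i) := by
        rw [hdiag, Complex.zero_le_real]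
        exact mul_nonneg (add_nonneg hc ht) (Complex.normSq_nonneg _)
      simpa only [Prod.swap_prod_mk] using add_nonneg this this
    · simp only [f, Prod.swap_prod_mk, mul_comm (a j) (a i)]
      exact Complex.zero_le_conj_mul_add_conj_mul ht (hbound i j hij) _ _
  have hsum : ∑ p, f p = (2⁻¹ : ℂ) * ∑ p, (f p + f p.swap) := by
    have hswap := Equiv.sum_comp (Equiv.prodComm ι ι) f
    simp only [Equiv.prodComm_apply] at hswap
    rw [Finset.sum_add_distrib, hswap]
    ring
  rw [hform, hsum]
  exact mul_nonneg (by positivity) (Finset.sum_nonneg fun p _ => hpair p)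

theorem posSemidef_smul_one_add_smul_weightedSwap_iff {c l : ℝ} {a : ι → ℝ} (hc : 0 ≤ c)
    (hl : 0 ≤ l) (ha : ∀ i, 0 ≤ a i) :
    ((c : ℂ) • 1 + (l : ℂ) • weightedSwap a).PosSemidef ↔ ∀ i j, i ≠ j → l * (a i * a j) ≤ c := by
  refine ⟨fun h i j hij => ?_, posSemidef_smul_one_add_smul_weightedSwap hc hl ha⟩
  have := (Matrix.posSemidef_iff_isHermitian_and_spectrum_nonneg.mp h).2
    (mem_spectrum_smul_one_add_smul_weightedSwap c l a i j (s := -1) (by norm_num) (.inl hij))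
  rw [Set.mem_ofPred_eq, Complex.zero_le_real] at this
  linarith

end WeightedSwap

theorem partialTranspose_isotropic {n : ℕ} (c l : ℝ) (a : Fin n → ℝ) :
    partialTranspose (Matrix.of fun p q => (c : ℂ) * (if p = q then 1 else 0) +
      (l : ℂ) * (if p.1 = p.2 ∧ q.1 = q.2 then ((a p.1 * a q.1 : ℝ) : ℂ) else 0)) =
      (c : ℂ) • 1 + (l : ℂ) • weightedSwap a := by
  ext ⟨i, j⟩ ⟨k, m⟩
  simp only [partialTranspose, weightedSwap, Matrix.of_apply, Matrix.add_apply,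
    Matrix.smul_apply, Matrix.one_apply, Prod.swap_prod_mk, Prod.mk.injEq, smul_eq_mul]
  split_ifs <;> grind

theorem stmt10_general (n : ℕ) (α : Fin n → ℝ) (hα : ∀ i, 0 < α i)
    (lam : ℝ) (hl0 : 0 ≤ lam) (hl1 : lam ≤ 1)
    (ρ : Matrix (Fin n × Fin n) (Fin n × Fin n) ℂ)
    (hρ : ρ = Matrix.of fun p q =>
      (((1 - lam) / (n : ℝ) ^ 2 : ℝ) : ℂ) * (if p = q then 1 else 0) +
      (lam : ℂ) * (if p.1 = p.2 ∧ q.1 = q.2 then ((α p.1 * α q.1 : ℝ) : ℂ) else 0)) :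
    (∀ i j : Fin n, i ≠ j →
        (((1 - lam) / (n : ℝ) ^ 2 + lam * (α i * α j) : ℝ) : ℂ) ∈
            spectrum ℂ (partialTranspose ρ) ∧
        (((1 - lam) / (n : ℝ) ^ 2 - lam * (α i * α j) : ℝ) : ℂ) ∈
            spectrum ℂ (partialTranspose ρ)) ∧
    (∀ i : Fin n,
        (((1 - lam) / (n : ℝ) ^ 2 + lam * α i ^ 2 : ℝ) : ℂ) ∈
            spectrum ℂ (partialTranspose ρ)) ∧
    ((partialTranspose ρ).PosSemidef ↔
        ∀ i j : Fin n, i ≠ j → lam ≤ 1 / (1 + (n : ℝ) ^ 2 * (α i * α j))) := by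
  set c := (1 - lam) / (n : ℝ) ^ 2
  have hc : 0 ≤ c := div_nonneg (by linarith) (sq_nonneg _)
  rw [hρ, partialTranspose_isotropic]
  have hspec := mem_spectrum_smul_one_add_smul_weightedSwap c lam α
  refine ⟨fun i j hij => ⟨?_, ?_⟩, fun i => ?_, ?_⟩
  · simpa using hspec i j (s := 1) (by norm_num) (.inl hij)
  · simpa [sub_eq_add_neg] using hspec i j (s := -1) (by norm_num) (.inl hij)
  · simpa [sq] using hspec i i (s := 1) (by norm_num) (.inr rfl)
  rw [posSemidef_smul_one_add_smul_weightedSwap_iff hc hl0 fun i => (hα i).le]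
  refine forall₃_congr fun i j _ => ?_
  have hn : (0 : ℝ) < (n : ℝ) ^ 2 := by have := i.pos; positivity
  have : 0 < 1 + (n : ℝ) ^ 2 * (α i * α j) := by have := hα i; have := hα j; positivity
  rw [le_div_iff₀ hn, le_div_iff₀ this]
  constructor <;> intro h <;> linarith

/-- For `ρ_λ = (1-λ) 1/n² + λ |ψ_α⟩⟨ψ_α|` with `|ψ_α⟩ = ∑ i, α_i |ii⟩`, `α_i > 0`,
`∑ α_i² = 1` and `0 ≤ λ ≤ 1`: the partial transpose of `ρ_λ` has eigenvalues
`(1-λ)/n² ± λ α_i α_j` (`i ≠ j`) and `(1-λ)/n² + λ α_i²`, and `ρ_λ` is PPT if and only if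
`λ ≤ min_{i≠j} 1/(1 + n² α_i α_j)`. -/
theorem stmt10 (n : ℕ) (hn : 2 ≤ n) (α : Fin n → ℝ) (hα : ∀ i, 0 < α i)
    (hα2 : ∑ i, α i ^ 2 = 1) (lam : ℝ) (hl0 : 0 ≤ lam) (hl1 : lam ≤ 1)
    (ρ : Matrix (Fin n × Fin n) (Fin n × Fin n) ℂ)
    (hρ : ρ = Matrix.of fun p q =>
      (((1 - lam) / (n : ℝ) ^ 2 : ℝ) : ℂ) * (if p = q then 1 else 0) +
      (lam : ℂ) * (if p.1 = p.2 ∧ q.1 = q.2 then ((α p.1 * α q.1 : ℝ) : ℂ) else 0)) :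
    (∀ i j : Fin n, i ≠ j →
        (((1 - lam) / (n : ℝ) ^ 2 + lam * (α i * α j) : ℝ) : ℂ) ∈
            spectrum ℂ (partialTranspose ρ) ∧
        (((1 - lam) / (n : ℝ) ^ 2 - lam * (α i * α j) : ℝ) : ℂ) ∈
            spectrum ℂ (partialTranspose ρ)) ∧
    (∀ i : Fin n,
        (((1 - lam) / (n : ℝ) ^ 2 + lam * α i ^ 2 : ℝ) : ℂ) ∈
            spectrum ℂ (partialTranspose ρ)) ∧
    ((partialTranspose ρ).PosSemidef ↔
        ∀ i j : Fin n, i ≠ j → lam ≤ 1 / (1 + (n : ℝ) ^ 2 * (α i * α j))) :=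
  stmt10_general n α hα lam hl0 hl1 ρ hρ
end

section
/- If F_x ∈ M_n(ℂ) are positive semidefinite, then for any unitary matrices U_x ∈ M_m(ℂ), the operator norm of Σ_x U_x ⊗ F_x in M_m ⊗ M_n satisfies ‖Σ_x U_x ⊗ F_x‖ ≤ ‖Σ_x F_x‖. -/
/-!
Factor each `F x = (b x)ᴴ * b x`. Then `∑ x, U x ⊗ F x = R * C`, where `R` is the block row of the
`U x ⊗ (b x)ᴴ` and `C` the block column of the `1 ⊗ b x`. Unitarity of the `U x` gives
`R * Rᴴ = Cᴴ * C = 1 ⊗ ∑ x, F x`, so by the C⋆-identity `‖R‖ * ‖C‖ = ‖1 ⊗ ∑ x, F x‖`, and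
`S ↦ 1 ⊗ S` is a ⋆-homomorphism of C⋆-algebras, hence contractive.
-/

open scoped Matrix Kronecker BigOperators
open ComplexOrder

open scoped Matrix.Norms.L2Operator MatrixOrder

namespace Matrix

section OneKronecker

variable {R : Type*} (m n : Type*) [Fintype m] [DecidableEq m] [Fintype n] [DecidableEq n]

def oneKroneckerStarAlgHom [CommSemiring R] [StarRing R] :
    Matrix n n R →⋆ₐ[R] Matrix (m × n) (m × n) R where
  toFun S := (1 : Matrix m m R) ⊗ₖ S
  map_one' := one_kronecker_one
  map_mul' S T := by rw [← mul_kronecker_mul, one_mul]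
  map_zero' := kronecker_zero _
  map_add' := kronecker_add _
  commutes' r := by
    simp only [Algebra.algebraMap_eq_smul_one, kronecker_smul, one_kronecker_one]
  map_star' S := by simp [star_eq_conjTranspose, conjTranspose_kronecker]

variable {m n}

theorem l2_opNorm_one_kronecker_le (S : Matrix n n ℂ) :
    ‖(1 : Matrix m m ℂ) ⊗ₖ S‖ ≤ ‖S‖ :=
  NonUnitalStarAlgHom.norm_apply_le (oneKroneckerStarAlgHom m n) S

end OneKronecker

section Blocks

variable {R X ι κ ι' : Type*}

def blockRow (A : X → Matrix ι κ R) : Matrix ι (X × κ) R := of fun i p => A p.1 i p.2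

def blockCol (B : X → Matrix κ ι' R) : Matrix (X × κ) ι' R := of fun p j => B p.1 p.2 j

theorem blockRow_mul_blockCol [Fintype X] [Fintype κ] [NonUnitalNonAssocSemiring R]
    (A : X → Matrix ι κ R) (B : X → Matrix κ ι' R) :
    blockRow A * blockCol B = ∑ x, A x * B x := by
  ext i j
  simp [blockRow, blockCol, mul_apply, Fintype.sum_prod_type, sum_apply]

theorem conjTranspose_blockRow [Star R] (A : X → Matrix ι κ R) :
    (blockRow A)ᴴ = blockCol fun x => (A x)ᴴ := rfl

theorem conjTranspose_blockCol [Star R] (B : X → Matrix κ ι' R) :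
    (blockCol B)ᴴ = blockRow fun x => (B x)ᴴ := rfl

theorem l2_opNorm_sum_mul_le [Fintype X] [Fintype ι] [DecidableEq ι] [Fintype κ] [Fintype ι']
    [DecidableEq ι'] (A : X → Matrix ι κ ℂ) (B : X → Matrix κ ι' ℂ) :
    ‖∑ x, A x * B x‖ ≤ √‖∑ x, A x * (A x)ᴴ‖ * √‖∑ x, (B x)ᴴ * B x‖ := by
  classical
  have hA : ‖∑ x, A x * (A x)ᴴ‖ = ‖blockRow A‖ * ‖blockRow A‖ := by
    rw [← l2_opNorm_conjTranspose (blockRow A), ← l2_opNorm_conjTranspose_mul_self,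
      conjTranspose_conjTranspose, conjTranspose_blockRow, blockRow_mul_blockCol]
  have hB : ‖∑ x, (B x)ᴴ * B x‖ = ‖blockCol B‖ * ‖blockCol B‖ := by
    rw [← l2_opNorm_conjTranspose_mul_self, conjTranspose_blockCol, blockRow_mul_blockCol]
  rw [hA, hB, Real.sqrt_mul_self (norm_nonneg _), Real.sqrt_mul_self (norm_nonneg _),
    ← blockRow_mul_blockCol]
  exact l2_opNorm_mul _ _

end Blocks

end Matrix

/-- If `F_x ∈ M_n(ℂ)` are positive semidefinite, then for any unitaries `U_x ∈ M_m(ℂ)`,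
`‖∑ x, U_x ⊗ F_x‖ ≤ ‖∑ x, F_x‖`. -/
theorem stmt15 (n m N : ℕ) (F : Fin N → Matrix (Fin n) (Fin n) ℂ)
    (hF : ∀ x, (F x).PosSemidef)
    (U : Fin N → Matrix (Fin m) (Fin m) ℂ)
    (hU : ∀ x, U x ∈ Matrix.unitaryGroup (Fin m) ℂ) :
    opNorm (∑ x, U x ⊗ₖ F x) ≤ opNorm (∑ x, F x) := by
  choose b hb using fun x => CStarAlgebra.nonneg_iff_eq_star_mul_self.mp (hF x).nonneg
  simp only [Matrix.star_eq_conjTranspose] at hb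
  have hUU : ∀ x, U x * (U x)ᴴ = 1 := fun x => Unitary.mul_star_self_of_mem (hU x)
  have hprod : ∀ x, (U x ⊗ₖ (b x)ᴴ) * (1 ⊗ₖ b x) = U x ⊗ₖ F x := fun x => by
    rw [← Matrix.mul_kronecker_mul, mul_one, hb]
  have hrow : ∀ x, (U x ⊗ₖ (b x)ᴴ) * (U x ⊗ₖ (b x)ᴴ)ᴴ = 1 ⊗ₖ F x := fun x => by
    rw [Matrix.conjTranspose_kronecker, ← Matrix.mul_kronecker_mul, hUU,
      Matrix.conjTranspose_conjTranspose, hb]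
  have hcol : ∀ x, ((1 : Matrix (Fin m) (Fin m) ℂ) ⊗ₖ b x)ᴴ * (1 ⊗ₖ b x) = 1 ⊗ₖ F x :=
    fun x => by
      rw [Matrix.conjTranspose_kronecker, ← Matrix.mul_kronecker_mul, Matrix.conjTranspose_one,
        one_mul, hb]
  have hsum : ∑ x, (1 : Matrix (Fin m) (Fin m) ℂ) ⊗ₖ F x = 1 ⊗ₖ ∑ x, F x :=
    (map_sum (Matrix.oneKroneckerStarAlgHom (R := ℂ) (Fin m) (Fin n)) F _).symm
  have hCS := Matrix.l2_opNorm_sum_mul_le (fun x => U x ⊗ₖ (b x)ᴴ)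
    (fun x => (1 : Matrix (Fin m) (Fin m) ℂ) ⊗ₖ b x)
  simp only [hprod, hrow, hcol, hsum, Real.mul_self_sqrt (norm_nonneg _)] at hCS
  exact hCS.trans (Matrix.l2_opNorm_one_kronecker_le _)
end
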